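/- Let R be the ring of integers of a number field, k ≥ 2, and a ∈ R nonzero. Define c₂(a) = Π_{𝔭^k ⊇ (a)} (1 − 1/N(𝔭^k)) · Π_{𝔭^k ⊉ (a)} (1 − 2/N(𝔭^k)), and σ_𝔡 = (1/N(𝔡^k)) Π_{𝔭 ∤ 𝔡}(1 − 2/N(𝔭^k)) for squarefree 𝔡. Then c₂(a) = Σ_{𝔡 squarefree, 𝔡^k ⊇ (a)} σ_𝔡, and the sum converges absolutely. -/

import Mathlib

open scoped NumberField Classical

/-- `σ_𝔡 = (1/N(𝔡^k)) Π_{𝔭 ∤ 𝔡}(1 - 2/N(𝔭^k))` for a squarefree ideal `𝔡`. -/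
noncomputable def sigmaD {K : Type*} [Field K] [NumberField K] (k : ℕ) (𝔡 : Ideal (𝓞 K)) : ℝ :=
  ((Ideal.absNorm (𝔡 ^ k) : ℝ))⁻¹ *
    ∏' 𝔭 : {𝔭 : Ideal (𝓞 K) // 𝔭.IsPrime ∧ 𝔭 ≠ ⊥ ∧ ¬ 𝔭 ∣ 𝔡},
      (1 - 2 / (Ideal.absNorm ((𝔭 : Ideal (𝓞 K)) ^ k) : ℝ))

/-- The second correlation function
`c₂(a) = Π_{𝔭^k ∣ (a)} (1 - 1/N(𝔭^k)) · Π_{𝔭^k ∤ (a)} (1 - 2/N(𝔭^k))`. -/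
noncomputable def cTwo {K : Type*} [Field K] [NumberField K] (k : ℕ) (a : 𝓞 K) : ℝ :=
  (∏' 𝔭 : {𝔭 : Ideal (𝓞 K) // 𝔭.IsPrime ∧ 𝔭 ≠ ⊥ ∧ 𝔭 ^ k ∣ Ideal.span {a}},
      (1 - ((Ideal.absNorm ((𝔭 : Ideal (𝓞 K)) ^ k) : ℝ))⁻¹)) *
    ∏' 𝔭 : {𝔭 : Ideal (𝓞 K) // 𝔭.IsPrime ∧ 𝔭 ≠ ⊥ ∧ ¬ 𝔭 ^ k ∣ Ideal.span {a}},
      (1 - 2 * ((Ideal.absNorm ((𝔭 : Ideal (𝓞 K)) ^ k) : ℝ))⁻¹)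

/-!
Only the finitely many primes `𝔭` with `𝔭 ^ k ∣ (a)` carry a factor of `c₂(a)` other than
`1 - 2/N(𝔭^k)`. Writing that factor as `1/N(𝔭^k) + (1 - 2/N(𝔭^k))` and expanding the finite
product gives one term for each set `T` of such primes, and this term is `σ_𝔡` for `𝔡 = ∏ T`;
the squarefree `𝔡` with `𝔡 ^ k ∣ (a)` are exactly these products, so the sum is finite.
The infinite products converge because at most `[K : ℚ]` primes have norm `n`
(their product divides `(n)`, of norm `n ^ [K : ℚ]`), whence `∑ 𝔭, N(𝔭)^(-k) ≤ [K : ℚ] ∑ n, n^(-k)`.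
-/

theorem prod_add_mul_tprod_diff_eq_sum_powerset {β α : Type*} [CommSemiring α]
    [TopologicalSpace α] [ContinuousMul α] [T2Space α] {P : Set β} {F : Finset β}
    (hF : ↑F ⊆ P) (u f : β → α) (hf : Multipliable fun x : ↑(P \ F) => f x) :
    (∏ x ∈ F, (u x + f x)) * ∏' x : ↑(P \ F), f x =
      ∑ T ∈ F.powerset, (∏ x ∈ T, u x) * ∏' x : ↑(P \ T), f x := by
  rw [Finset.prod_add, Finset.sum_mul]
  refine Finset.sum_congr rfl fun T hT => ?_
  have hTF : T ⊆ F := Finset.mem_powerset.1 hT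
  have hsplit : P \ T = ↑(F \ T) ∪ (P \ F) := by
    ext x
    have := @hF x
    have := @hTF x
    simp only [Set.mem_sdiff, Finset.mem_coe, Set.mem_union, Finset.mem_sdiff]
    tauto
  have hdisj : Disjoint (↑(F \ T) : Set β) (P \ F) :=
    Set.disjoint_left.2 fun x hx hx' => hx'.2 (Finset.mem_sdiff.1 hx).1
  rw [tprod_congr_set_coe f hsplit, Multipliable.tprod_union_disjoint hdisj .of_finite hf,
    Finset.tprod_subtype', mul_assoc]

namespace UniqueFactorizationMonoid

variable {α : Type*} [CommMonoidWithZero α] [NormalizationMonoid α]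
  [UniqueFactorizationMonoid α] [Subsingleton αˣ]

theorem normalizedFactors_finset_prod_of_prime {T : Finset α} (hT : ∀ p ∈ T, Prime p) :
    normalizedFactors (∏ p ∈ T, p) = T.val := by
  rw [Finset.prod_eq_multiset_prod, Multiset.map_id']
  exact normalizedFactors_prod_of_prime hT

theorem prime_dvd_finset_prod_iff {T : Finset α} (hT : ∀ p ∈ T, Prime p) {p : α}
    (hp : Prime p) : p ∣ ∏ q ∈ T, q ↔ p ∈ T := by
  have := nontrivial_of_ne p 0 hp.ne_zero
  have hne : ∏ q ∈ T, q ≠ 0 := Finset.prod_ne_zero_iff.2 fun q hq => (hT q hq).ne_zero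
  rw [← Finset.mem_val, ← normalizedFactors_finset_prod_of_prime hT, mem_normalizedFactors_iff hne]
  exact ⟨fun h => ⟨hp, h⟩, And.right⟩

theorem squarefree_finset_prod_of_prime [Nontrivial α] {T : Finset α} (hT : ∀ p ∈ T, Prime p) :
    Squarefree (∏ p ∈ T, p) := by
  have hne : ∏ q ∈ T, q ≠ 0 := Finset.prod_ne_zero_iff.2 fun q hq => (hT q hq).ne_zero
  rw [squarefree_iff_nodup_normalizedFactors hne, normalizedFactors_finset_prod_of_prime hT]
  exact T.nodup

theorem prod_toFinset_normalizedFactors_of_squarefree [Nontrivial α] {d : α} (hd : Squarefree d) :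
    ∏ p ∈ (normalizedFactors d).toFinset, p = d := by
  have hd0 := hd.ne_zero
  rw [Finset.prod_eq_multiset_prod, Multiset.map_id', Multiset.toFinset_val,
    Multiset.dedup_eq_self.2 ((squarefree_iff_nodup_normalizedFactors hd0).1 hd)]
  exact associated_iff_eq.1 (prod_normalizedFactors hd0)

omit [NormalizationMonoid α] in
theorem finset_prod_pow_dvd_iff_of_prime {T : Finset α} (hT : ∀ p ∈ T, Prime p) {k : ℕ} {a : α} :
    (∏ p ∈ T, p) ^ k ∣ a ↔ ∀ p ∈ T, p ^ k ∣ a := by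
  refine ⟨fun h p hp => (pow_dvd_pow_of_dvd (Finset.dvd_prod_of_mem _ hp) k).trans h,
    fun h => ?_⟩
  rw [← Finset.prod_pow]
  refine Finset.prod_dvd_of_isRelPrime (fun p hp q hq hpq => ?_) h
  have : IsRelPrime p q := by
    rw [(hT p hp).irreducible.isRelPrime_iff_not_dvd, prime_dvd_prime_iff_eq (hT p hp) (hT q hq)]
    exact hpq
  exact this.pow

noncomputable def primesWithPowDvd (k : ℕ) (a : α) : Finset α :=
  {p ∈ (normalizedFactors a).toFinset | p ^ k ∣ a}

theorem mem_primesWithPowDvd {k : ℕ} (hk : k ≠ 0) {a p : α} (ha : a ≠ 0) :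
    p ∈ primesWithPowDvd k a ↔ Prime p ∧ p ^ k ∣ a := by
  rw [primesWithPowDvd, Finset.mem_filter, Multiset.mem_toFinset, mem_normalizedFactors_iff ha]
  exact ⟨fun h => ⟨h.1.1, h.2⟩, fun h => ⟨⟨h.1, (dvd_pow_self p hk).trans h.2⟩, h.2⟩⟩

theorem setOf_squarefree_pow_dvd_eq_image_powerset {k : ℕ} (hk : k ≠ 0) {a : α} (ha : a ≠ 0) :
    {d : α | Squarefree d ∧ d ^ k ∣ a} =
      ((primesWithPowDvd k a).powerset.image fun T => ∏ p ∈ T, p) := by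
  have := nontrivial_of_ne a 0 ha
  ext d
  simp only [Set.mem_ofPred_eq, Finset.coe_image, Finset.coe_powerset, Set.mem_image,
    Set.mem_preimage, Set.mem_powerset_iff, Finset.coe_subset]
  constructor
  · rintro ⟨hd, hdk⟩
    refine ⟨(normalizedFactors d).toFinset, fun p hp => ?_,
      prod_toFinset_normalizedFactors_of_squarefree hd⟩
    rw [Multiset.mem_toFinset] at hp
    exact (mem_primesWithPowDvd hk ha).2 ⟨prime_of_normalized_factor p hp,
      (pow_dvd_pow_of_dvd (dvd_of_mem_normalizedFactors hp) k).trans hdk⟩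
  · rintro ⟨T, hT, rfl⟩
    have hTprime : ∀ p ∈ T, Prime p := fun p hp => ((mem_primesWithPowDvd hk ha).1 (hT hp)).1
    exact ⟨squarefree_finset_prod_of_prime hTprime, (finset_prod_pow_dvd_iff_of_prime hTprime).2
      fun p hp => ((mem_primesWithPowDvd hk ha).1 (hT hp)).2⟩

theorem injOn_finset_prod_of_prime :
    Set.InjOn (fun T : Finset α => ∏ p ∈ T, p) {T | ∀ p ∈ T, Prime p} := fun T hT T' hT' h => by
  rw [← Finset.val_inj, ← normalizedFactors_finset_prod_of_prime hT,
    ← normalizedFactors_finset_prod_of_prime hT']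
  exact congrArg normalizedFactors h

end UniqueFactorizationMonoid

namespace Ideal

variable {S : Type*} [CommRing S] [IsDedekindDomain S] [Module.Free ℤ S] [Module.Finite ℤ S]

omit [Module.Free ℤ S] [Module.Finite ℤ S] in
theorem isPrime_and_ne_bot_iff_prime {𝔭 : Ideal S} : 𝔭.IsPrime ∧ 𝔭 ≠ ⊥ ↔ Prime 𝔭 :=
  ⟨fun h => prime_of_isPrime h.2 h.1,
    fun h => ⟨isPrime_of_prime h, by rw [← zero_eq_bot]; exact h.ne_zero⟩⟩

theorem two_le_absNorm_of_prime {𝔭 : Ideal S} (h𝔭 : Prime 𝔭) : 2 ≤ absNorm 𝔭 := by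
  have h0 : absNorm 𝔭 ≠ 0 := by
    rw [Ne, absNorm_eq_zero_iff, ← zero_eq_bot]; exact h𝔭.ne_zero
  have h1 : absNorm 𝔭 ≠ 1 := by
    rw [Ne, absNorm_eq_one_iff, ← one_eq_top]; exact h𝔭.ne_one
  omega

theorem card_le_finrank_of_forall_absNorm_eq {n : ℕ} {s : Finset (Ideal S)}
    (hs : ∀ 𝔭 ∈ s, Prime 𝔭 ∧ absNorm 𝔭 = n) : s.card ≤ Module.finrank ℤ S := by
  rcases s.eq_empty_or_nonempty with rfl | ⟨𝔭, h𝔭⟩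
  · simp
  have hn : 2 ≤ n := (hs 𝔭 h𝔭).2 ▸ two_le_absNorm_of_prime (hs 𝔭 h𝔭).1
  have hdvd : ∏ 𝔭 ∈ s, 𝔭 ∣ span {algebraMap ℤ S n} := by
    refine Finset.prod_primes_dvd _ (fun 𝔭 h𝔭 => (hs 𝔭 h𝔭).1) fun 𝔭 h𝔭 => ?_
    rw [dvd_span_singleton, ← (hs 𝔭 h𝔭).2]
    simpa using absNorm_mem 𝔭
  have := map_dvd absNorm hdvd
  rw [map_prod, Finset.prod_congr rfl fun 𝔭 h𝔭 => (hs 𝔭 h𝔭).2, Finset.prod_const,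
    absNorm_span_singleton, Algebra.norm_algebraMap, Int.natAbs_pow, Int.natAbs_natCast] at this
  exact (Nat.pow_dvd_pow_iff_le_right hn).1 this

theorem sum_inv_absNorm_pow_le {k : ℕ} (hk : 2 ≤ k) {s : Finset (Ideal S)}
    (hs : ∀ 𝔭 ∈ s, Prime 𝔭) :
    ∑ 𝔭 ∈ s, ((absNorm 𝔭 : ℝ) ^ k)⁻¹ ≤ Module.finrank ℤ S * ∑' n : ℕ, ((n : ℝ) ^ k)⁻¹ := by
  calc ∑ 𝔭 ∈ s, ((absNorm 𝔭 : ℝ) ^ k)⁻¹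
      = ∑ n ∈ s.image absNorm, (s.filter (absNorm · = n)).card • ((n : ℝ) ^ k)⁻¹ :=
        Finset.sum_comp (fun n : ℕ => ((n : ℝ) ^ k)⁻¹) absNorm
    _ ≤ ∑ n ∈ s.image absNorm, (Module.finrank ℤ S : ℝ) * ((n : ℝ) ^ k)⁻¹ := by
        gcongr with n
        rw [nsmul_eq_mul]
        gcongr
        exact_mod_cast card_le_finrank_of_forall_absNorm_eq fun 𝔭 h𝔭 =>
          ⟨hs 𝔭 (Finset.mem_filter.1 h𝔭).1, (Finset.mem_filter.1 h𝔭).2⟩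
    _ ≤ Module.finrank ℤ S * ∑' n : ℕ, ((n : ℝ) ^ k)⁻¹ := by
        rw [← Finset.mul_sum]
        gcongr
        exact (Real.summable_nat_pow_inv.2 hk).sum_le_tsum _ fun _ _ => by positivity

theorem summable_inv_absNorm_pow {k : ℕ} (hk : 2 ≤ k) {P : Set (Ideal S)}
    (hP : ∀ 𝔭 ∈ P, Prime 𝔭) : Summable fun 𝔭 : P => ((absNorm (𝔭 : Ideal S) : ℝ) ^ k)⁻¹ := by
  refine summable_of_sum_le (c := Module.finrank ℤ S * ∑' n : ℕ, ((n : ℝ) ^ k)⁻¹)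
    (fun _ => by positivity) fun s => ?_
  have := sum_inv_absNorm_pow_le hk (s := s.map (Function.Embedding.subtype _)) fun 𝔭 h𝔭 => by
    obtain ⟨𝔮, -, rfl⟩ := Finset.mem_map.1 h𝔭
    exact hP _ 𝔮.2
  rwa [Finset.sum_map] at this

theorem multipliable_one_sub_two_mul_inv_absNorm_pow {k : ℕ} (hk : 2 ≤ k) {P : Set (Ideal S)}
    (hP : ∀ 𝔭 ∈ P, Prime 𝔭) :
    Multipliable fun 𝔭 : P => 1 - 2 * (absNorm ((𝔭 : Ideal S) ^ k) : ℝ)⁻¹ := by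
  simpa [sub_eq_add_neg, map_pow] using
    Real.multipliable_one_add_of_summable ((summable_inv_absNorm_pow hk hP).mul_left (-2))

end Ideal

open Ideal UniqueFactorizationMonoid

section NumberField

variable {K : Type*} [Field K] [NumberField K]

theorem cTwo_eq_prod_mul_tprod {k : ℕ} (hk : k ≠ 0) {a : 𝓞 K} (ha : span {a} ≠ 0) :
    cTwo k a = (∏ 𝔭 ∈ primesWithPowDvd k (span {a}), (1 - (absNorm (𝔭 ^ k) : ℝ)⁻¹)) *
      ∏' 𝔭 : ↑({𝔭 : Ideal (𝓞 K) | Prime 𝔭} \ ↑(primesWithPowDvd k (span {a}))),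
        (1 - 2 * (absNorm ((𝔭 : Ideal (𝓞 K)) ^ k) : ℝ)⁻¹) := by
  unfold cTwo
  congr 1
  · rw [← Finset.tprod_subtype']
    refine tprod_congr_set_coe (fun 𝔭 => 1 - (absNorm (𝔭 ^ k) : ℝ)⁻¹) (Set.ext fun 𝔭 => ?_)
    show 𝔭.IsPrime ∧ 𝔭 ≠ ⊥ ∧ _ ↔ _
    rw [Finset.mem_coe, mem_primesWithPowDvd hk ha, ← and_assoc, isPrime_and_ne_bot_iff_prime]
  · refine tprod_congr_set_coe (fun 𝔭 => 1 - 2 * (absNorm (𝔭 ^ k) : ℝ)⁻¹) (Set.ext fun 𝔭 => ?_)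
    show 𝔭.IsPrime ∧ 𝔭 ≠ ⊥ ∧ _ ↔ _
    rw [Set.mem_sdiff, Finset.mem_coe, mem_primesWithPowDvd hk ha, ← and_assoc,
      isPrime_and_ne_bot_iff_prime]
    exact and_congr_right fun h𝔭 => not_congr (and_iff_right h𝔭).symm

theorem sigmaD_finset_prod {k : ℕ} {T : Finset (Ideal (𝓞 K))} (hT : ∀ 𝔭 ∈ T, Prime 𝔭) :
    sigmaD k (∏ 𝔭 ∈ T, 𝔭) = (∏ 𝔭 ∈ T, (absNorm (𝔭 ^ k) : ℝ)⁻¹) *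
      ∏' 𝔭 : ↑({𝔭 : Ideal (𝓞 K) | Prime 𝔭} \ ↑T),
        (1 - 2 * (absNorm ((𝔭 : Ideal (𝓞 K)) ^ k) : ℝ)⁻¹) := by
  unfold sigmaD
  congr 1
  · rw [← Finset.prod_pow, map_prod, Nat.cast_prod, Finset.prod_inv_distrib]
  · simp only [div_eq_mul_inv]
    refine tprod_congr_set_coe (fun 𝔭 => 1 - 2 * (absNorm (𝔭 ^ k) : ℝ)⁻¹) (Set.ext fun 𝔭 => ?_)
    show 𝔭.IsPrime ∧ 𝔭 ≠ ⊥ ∧ _ ↔ _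
    rw [Set.mem_sdiff, Finset.mem_coe, ← and_assoc, isPrime_and_ne_bot_iff_prime]
    exact and_congr_right fun h𝔭 => not_congr (prime_dvd_finset_prod_iff hT h𝔭)

end NumberField

/-- For `k ≥ 2` and nonzero `a ∈ 𝓞 K`,
`c₂(a) = Σ_{𝔡 squarefree, 𝔡^k ∣ (a)} σ_𝔡`, and the sum converges absolutely. -/
theorem stmt10 (K : Type*) [Field K] [NumberField K] (k : ℕ) (hk : 2 ≤ k)
    (a : 𝓞 K) (ha : a ≠ 0) :
    Summable (fun 𝔡 : {𝔡 : Ideal (𝓞 K) // Squarefree 𝔡 ∧ 𝔡 ^ k ∣ Ideal.span {a}} =>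
      sigmaD k (𝔡 : Ideal (𝓞 K))) ∧
    cTwo k a =
      ∑' 𝔡 : {𝔡 : Ideal (𝓞 K) // Squarefree 𝔡 ∧ 𝔡 ^ k ∣ Ideal.span {a}},
        sigmaD k (𝔡 : Ideal (𝓞 K)) := by
  have hk0 : k ≠ 0 := by omega
  have ha' : span {a} ≠ 0 := by rwa [Ne, zero_eq_bot, span_singleton_eq_bot]
  set F := primesWithPowDvd k (span {a})
  have hprime : ∀ T ∈ F.powerset, ∀ 𝔭 ∈ T, Prime 𝔭 := fun T hT 𝔭 h𝔭 =>
    ((mem_primesWithPowDvd hk0 ha').1 (Finset.mem_powerset.1 hT h𝔭)).1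
  have hdivisors := setOf_squarefree_pow_dvd_eq_image_powerset hk0 ha'
  have hfinite : {𝔡 | Squarefree 𝔡 ∧ 𝔡 ^ k ∣ span {a}}.Finite := hdivisors ▸ Finset.finite_toSet _
  have : Finite {𝔡 : Ideal (𝓞 K) // Squarefree 𝔡 ∧ 𝔡 ^ k ∣ span {a}} := hfinite.to_subtype
  refine ⟨.of_finite, ?_⟩
  calc cTwo k a = (∏ 𝔭 ∈ F, ((absNorm (𝔭 ^ k) : ℝ)⁻¹ + (1 - 2 * (absNorm (𝔭 ^ k) : ℝ)⁻¹))) *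
        ∏' 𝔭 : ↑({𝔭 : Ideal (𝓞 K) | Prime 𝔭} \ ↑F),
          (1 - 2 * (absNorm ((𝔭 : Ideal (𝓞 K)) ^ k) : ℝ)⁻¹) := by
        rw [cTwo_eq_prod_mul_tprod hk0 ha']
        congr 1
        exact Finset.prod_congr rfl fun _ _ => by ring
    _ = ∑ T ∈ F.powerset, sigmaD k (∏ 𝔭 ∈ T, 𝔭) := by
        rw [prod_add_mul_tprod_diff_eq_sum_powerset (P := {𝔭 | Prime 𝔭})
          (hprime F (Finset.mem_powerset_self F))
          (fun 𝔭 => (absNorm (𝔭 ^ k) : ℝ)⁻¹) (fun 𝔭 => 1 - 2 * (absNorm (𝔭 ^ k) : ℝ)⁻¹)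
          (multipliable_one_sub_two_mul_inv_absNorm_pow hk fun 𝔭 h𝔭 => h𝔭.1)]
        exact Finset.sum_congr rfl fun T hT => (sigmaD_finset_prod (hprime T hT)).symm
    _ = ∑' 𝔡 : {𝔡 : Ideal (𝓞 K) // Squarefree 𝔡 ∧ 𝔡 ^ k ∣ Ideal.span {a}},
        sigmaD k (𝔡 : Ideal (𝓞 K)) := by
        rw [← Finset.sum_image (injOn_finset_prod_of_prime.mono hprime), ← Finset.tsum_subtype']
        exact (tsum_congr_set_coe (sigmaD k) hdivisors).symm
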